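/- arXiv:1904.01197 — 6 statements merged into one kernel-verified Lean document; each statement's English description precedes it below -/
import Mathlib

section
/- Let Δ > 0 and let Q_Δ be the uniform quantizer Q_Δ(x) = Δ·⌊x/Δ + 1/2⌋. Let X be a real-valued random variable and let U be a random variable independent of X, uniformly distributed on [-Δ/2, Δ/2]. Define the quantization error e = Q_Δ(X + U) − (X + U). Then the joint law of (X, e) equals the product of the law of X and the uniform distribution on [-Δ/2, Δ/2]; in particular, e is uniformly distributed on [-Δ/2, Δ/2] and independent of X. -/
/-!
The quantization error of `y` is `-y` reduced modulo `Δ` into `(-Δ/2, Δ/2]`. Reduction modulo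
`Δ` factors through the circle `ℝ ⧸ Δℤ`, onto which Lebesgue measure on any interval of length `Δ`
projects as Haar measure; hence for every fixed `x` the error of `x + U` is again uniform on
`[-Δ/2, Δ/2]`. Since `X` and `U` are independent, the map `(x, u) ↦ (x, e(x + u))` is then a skew
product preserving the law of `(X, U)`.
-/

open MeasureTheory ProbabilityTheory

/-- The uniform quantizer with step size `Δ`: rounding to the nearest multiple of `Δ`. -/
noncomputable def uniformQuantizer (Δ x : ℝ) : ℝ := Δ * ⌊x / Δ + 1 / 2⌋

/-- The uniform probability distribution on the interval `[a, b]`. -/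
noncomputable def uniformIcc (a b : ℝ) : Measure ℝ := volume[|Set.Icc a b]

open Set

lemma measurePreserving_toIocMod {p : ℝ} (hp : 0 < p) (a c : ℝ) :
    MeasurePreserving (toIocMod hp a) (volume.restrict (Ioc c (c + p)))
      (volume.restrict (Ioc a (a + p))) := by
  have : Fact (0 < p) := ⟨hp⟩
  exact (measurePreserving_subtype_coe measurableSet_Ioc).comp
    ((AddCircle.measurePreserving_equivIoc p).comp (AddCircle.measurePreserving_mk p c))

noncomputable def quantizationError (Δ y : ℝ) : ℝ := uniformQuantizer Δ y - y

lemma measurable_quantizationError (Δ : ℝ) : Measurable (quantizationError Δ) := by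
  unfold quantizationError uniformQuantizer
  fun_prop

lemma quantizationError_eq_toIocMod {Δ : ℝ} (hΔ : 0 < Δ) (y : ℝ) :
    quantizationError Δ y = toIocMod hΔ (-(Δ / 2)) (-y) := by
  have : (-(Δ / 2) + Δ - -y) / Δ = y / Δ + 1 / 2 := by field_simp; ring
  rw [toIocMod, toIocDiv_eq_neg_floor, this, quantizationError, uniformQuantizer, neg_smul,
    sub_neg_eq_add, zsmul_eq_mul]
  ring

lemma measurePreserving_quantizationError_const_add {Δ : ℝ} (hΔ : 0 < Δ) (x : ℝ) :
    MeasurePreserving (fun u => quantizationError Δ (x + u))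
      (volume.restrict (Icc (-(Δ / 2)) (Δ / 2))) (volume.restrict (Icc (-(Δ / 2)) (Δ / 2))) := by
  have hshift : MeasurePreserving (fun u : ℝ => -(x + u)) volume volume :=
    (Measure.measurePreserving_neg volume).comp (measurePreserving_add_left volume x)
  have hpreimage : (fun u : ℝ => -(x + u)) ⁻¹' Ioc (-x - Δ / 2) (-x - Δ / 2 + Δ)
      = Ico (-(Δ / 2)) (Δ / 2) := by
    ext u
    simp only [mem_preimage, mem_Ioc, mem_Ico]
    constructor <;> rintro ⟨h₁, h₂⟩ <;> constructor <;> linarith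
  have h := (measurePreserving_toIocMod hΔ (-(Δ / 2)) (-x - Δ / 2)).comp
    (hshift.restrict_preimage measurableSet_Ioc)
  rw [hpreimage, show -(Δ / 2) + Δ = Δ / 2 by ring, Measure.restrict_congr_set Ico_ae_eq_Icc,
    Measure.restrict_congr_set Ioc_ae_eq_Icc] at h
  convert h using 1
  funext u
  exact quantizationError_eq_toIocMod hΔ (x + u)

lemma map_quantizationError_const_add_uniformIcc {Δ : ℝ} (hΔ : 0 < Δ) (x : ℝ) :
    (uniformIcc (-(Δ / 2)) (Δ / 2)).map (fun u => quantizationError Δ (x + u))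
      = uniformIcc (-(Δ / 2)) (Δ / 2) := by
  rw [uniformIcc, ProbabilityTheory.cond, Measure.map_smul,
    (measurePreserving_quantizationError_const_add hΔ x).map_eq]

/-- **Dithered quantization (Schuchman, uniform dither).**
If `U` is uniform on `[-Δ/2, Δ/2]` and independent of `X`, then the quantization error
`e = Q_Δ(X + U) − (X + U)` is uniform on `[-Δ/2, Δ/2]` and independent of `X`:
the joint law of `(X, e)` is the product of the law of `X` and the uniform law. -/
theorem dithered_quantization_error_uniform_indep
    {Ω : Type*} [MeasurableSpace Ω] (P : Measure Ω) [IsProbabilityMeasure P]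
    (Δ : ℝ) (hΔ : 0 < Δ)
    (X U : Ω → ℝ) (hX : Measurable X) (hU : Measurable U)
    (hindep : IndepFun X U P)
    (hUlaw : Measure.map U P = uniformIcc (-(Δ / 2)) (Δ / 2))
    (e : Ω → ℝ)
    (he : e = fun ω => uniformQuantizer Δ (X ω + U ω) - (X ω + U ω)) :
    Measure.map (fun ω => (X ω, e ω)) P
      = (Measure.map X P).prod (uniformIcc (-(Δ / 2)) (Δ / 2)) := by
  have hXU : P.map (fun ω => (X ω, U ω)) = (P.map X).prod (P.map U) :=
    (indepFun_iff_map_prod_eq_prod_map_map hX.aemeasurable hU.aemeasurable).1 hindep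
  have hskew : MeasurePreserving (fun p : ℝ × ℝ => (p.1, quantizationError Δ (p.1 + p.2)))
      ((P.map X).prod (P.map U)) ((P.map X).prod (P.map U)) :=
    (MeasurePreserving.id _).skew_product (g := fun x u => quantizationError Δ (x + u))
      ((measurable_quantizationError Δ).comp measurable_add)
      (ae_of_all _ fun x => hUlaw ▸ map_quantizationError_const_add_uniformIcc hΔ x)
  rw [← hUlaw, ← hskew.map_eq, ← hXU, Measure.map_map hskew.measurable (hX.prodMk hU), he]
  rfl
end

section
/- Let M ≥ 1 be an integer, set Δ = 1/M, and let Q_Δ(x) = Δ·⌊x/Δ + 1/2⌋ be the uniform quantizer with step size Δ. Let U be uniformly distributed on [-1/(2M), 1/(2M)]. Then for every x ∈ [0, 1] and every integer 0 ≤ l < M with l/M ≤ x < (l+1)/M, one has P(Q_Δ(x + U) = l/M) = l + 1 − M·x and P(Q_Δ(x + U) = (l+1)/M) = M·x − l. Consequently, Q_Δ(x + U) has exactly the distribution of the M-level stochastic quantizer Q^(s)(x), which outputs l/M with probability l + 1 − M·x and (l+1)/M with probability M·x − l. -/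
/-! Rounding `x + U` to the grid `Δℤ` gives `kΔ` exactly when `U` falls in the cell
`[(k - 1/2)Δ - x, (k + 1/2)Δ - x)`. This cell has length `Δ`, as does the support of the
dither, and the two overlap in length `Δ - |kΔ - x|`; so `Q_Δ(x + U) = kΔ` has the
"hat" probability `(1 - |k - x/Δ|)⁺`, which for the two grid points around `x` is the
stochastic-quantization weight. -/

open MeasureTheory ProbabilityTheory

open Set

theorem uniformQuantizer_eq_intCast_mul_iff {Δ : ℝ} (hΔ : 0 < Δ) (k : ℤ) (y : ℝ) :
    uniformQuantizer Δ y = k * Δ ↔ y ∈ Ico ((k - 1 / 2) * Δ) ((k + 1 / 2) * Δ) := by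
  rw [uniformQuantizer, mul_comm, mul_left_inj' hΔ.ne', Int.cast_inj, Int.floor_eq_iff,
    mem_Ico, ← sub_le_iff_le_add, ← lt_sub_iff_add_lt, le_div_iff₀ hΔ, div_lt_iff₀ hΔ]
  constructor <;> rintro ⟨h₁, h₂⟩ <;> constructor <;> linarith

theorem uniformIcc_apply_Ico {a b : ℝ} (hab : a < b) (c d : ℝ) :
    uniformIcc a b (Ico c d) = ENNReal.ofReal ((min b d - max a c) / (b - a)) := by
  have hnull : (Icc a b ∩ Ico c d : Set ℝ) =ᵐ[volume] (Ico a b ∩ Ico c d : Set ℝ) :=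
    Ico_ae_eq_Icc.symm.inter (ae_eq_refl _)
  rw [uniformIcc, cond_apply measurableSet_Icc, measure_congr hnull, Ico_inter_Ico,
    Real.volume_Icc, Real.volume_Ico, ENNReal.ofReal_div_of_pos (sub_pos.mpr hab),
    ENNReal.div_eq_inv_mul]

theorem measure_uniformQuantizer_add_eq {Ω : Type*} [MeasurableSpace Ω] (P : Measure Ω)
    {Δ : ℝ} (hΔ : 0 < Δ) {U : Ω → ℝ} (hU : Measurable U)
    (hUlaw : P.map U = uniformIcc (-(Δ / 2)) (Δ / 2)) (x : ℝ) (k : ℤ) :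
    P {ω | uniformQuantizer Δ (x + U ω) = k * Δ} = ENNReal.ofReal (1 - |k - x / Δ|) := by
  have hevent : {ω | uniformQuantizer Δ (x + U ω) = k * Δ}
      = U ⁻¹' Ico ((k - 1 / 2) * Δ - x) ((k + 1 / 2) * Δ - x) := by
    ext ω
    simp only [mem_ofPred_eq, mem_preimage, uniformQuantizer_eq_intCast_mul_iff hΔ, mem_Ico]
    constructor <;> rintro ⟨h₁, h₂⟩ <;> constructor <;> linarith
  rw [hevent, ← Measure.map_apply hU measurableSet_Ico, hUlaw,
    uniformIcc_apply_Ico (by linarith)]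
  congr 1
  rcases le_total (k * Δ) x with h | h
  · have hk : (k : ℝ) - x / Δ ≤ 0 := by rw [sub_nonpos, le_div_iff₀ hΔ]; exact h
    rw [abs_of_nonpos hk, min_eq_right (by linarith), max_eq_left (by linarith)]
    field_simp
    ring
  · have hk : 0 ≤ (k : ℝ) - x / Δ := by rw [sub_nonneg, div_le_iff₀ hΔ]; exact h
    rw [abs_of_nonneg hk, min_eq_left (by linarith), max_eq_right (by linarith)]
    field_simp
    ring

theorem halfDithered_eq_stochastic_quantization_general
    {Ω : Type*} [MeasurableSpace Ω] (P : Measure Ω)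
    (M : ℕ)
    (U : Ω → ℝ) (hU : Measurable U)
    (hUlaw : Measure.map U P = uniformIcc (-(1 / (2 * M))) (1 / (2 * M)))
    (x : ℝ)
    (l : ℕ) (hlM : l < M) (hlx : (l : ℝ) / M ≤ x) (hxl : x < ((l : ℝ) + 1) / M) :
    (P {ω | uniformQuantizer (1 / M) (x + U ω) = (l : ℝ) / M}).toReal
        = (l : ℝ) + 1 - M * x ∧
      (P {ω | uniformQuantizer (1 / M) (x + U ω) = ((l : ℝ) + 1) / M}).toReal
        = M * x - l := by
  have hM : (0 : ℝ) < M := Nat.cast_pos.mpr (Nat.zero_lt_of_lt hlM)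
  have hlaw : P.map U = uniformIcc (-((1 / M) / 2)) ((1 / M) / 2) := by
    rw [hUlaw, div_div, mul_comm (M : ℝ)]
  have hprob (k : ℤ) := measure_uniformQuantizer_add_eq P (one_div_pos.mpr hM) hU hlaw x k
  rw [div_le_iff₀ hM] at hlx
  rw [lt_div_iff₀ hM] at hxl
  have hl : (l : ℝ) / M = ((l : ℤ) : ℝ) * (1 / M) := by push_cast; ring
  have hl' : ((l : ℝ) + 1) / M = ((l + 1 : ℤ) : ℝ) * (1 / M) := by push_cast; ring
  rw [hl, hl', hprob, hprob, div_div_eq_mul_div, div_one]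
  push_cast
  rw [abs_of_nonpos (by linarith), abs_of_nonneg (by linarith),
    ENNReal.toReal_ofReal (by linarith), ENNReal.toReal_ofReal (by linarith)]
  constructor <;> ring

/-- **Stochastic quantization = half-dithered quantization (Lemma 1).**
With `Δ = 1/M` and a uniform dither `U` on `[-1/(2M), 1/(2M)]`, for every `x ∈ [0,1]` lying in
`[l/M, (l+1)/M)`, the half-dithered quantizer `Q_Δ(x + U)` outputs `l/M` with probability
`l + 1 − M·x` and `(l+1)/M` with probability `M·x − l`, i.e. it has exactly the distribution
of the `M`-level stochastic quantizer. -/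
theorem halfDithered_eq_stochastic_quantization
    {Ω : Type*} [MeasurableSpace Ω] (P : Measure Ω) [IsProbabilityMeasure P]
    (M : ℕ) (hM : 1 ≤ M)
    (U : Ω → ℝ) (hU : Measurable U)
    (hUlaw : Measure.map U P = uniformIcc (-(1 / (2 * M))) (1 / (2 * M)))
    (x : ℝ) (hx0 : 0 ≤ x) (hx1 : x ≤ 1)
    (l : ℕ) (hlM : l < M) (hlx : (l : ℝ) / M ≤ x) (hxl : x < ((l : ℝ) + 1) / M) :
    (P {ω | uniformQuantizer (1 / M) (x + U ω) = (l : ℝ) / M}).toReal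
        = (l : ℝ) + 1 - M * x ∧
      (P {ω | uniformQuantizer (1 / M) (x + U ω) = ((l : ℝ) + 1) / M}).toReal
        = M * x - l :=
  halfDithered_eq_stochastic_quantization_general P M U hU hUlaw x l hlM hlx hxl
end

section
/- Let g be a square-integrable random vector in ℝⁿ with E[g] = μ, and let e be a random vector in ℝⁿ, independent of g, with i.i.d. coordinates uniform on [-Δ/2, Δ/2]. Define g̃ = g + ‖g‖_∞ · e. Then E[‖g̃ − μ‖₂²] ≤ (nΔ²/12)·E[‖g‖₂²] + E[‖g − μ‖₂²]. -/
open MeasureTheory ProbabilityTheory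

/-! Write `g̃ᵢ - μᵢ = (gᵢ - μᵢ) + ‖g‖_∞ eᵢ` and expand the square. As `eᵢ` is centred and
independent of `g`, the cross term has mean zero and the last term has mean
`E[eᵢ²] E[‖g‖_∞²] = (Δ²/12) E[‖g‖_∞²]`. Summing over the `n` coordinates and using
`‖g‖_∞² ≤ ‖g‖₂²` gives the bound. -/

section UniformIcc

variable {a b : ℝ}

theorem isProbabilityMeasure_uniformIcc (hab : a < b) : IsProbabilityMeasure (uniformIcc a b) :=
  cond_isProbabilityMeasure_of_finite (by simp [hab]) (by simp)

theorem memLp_id_uniformIcc (hab : a < b) (p : ENNReal) : MemLp id p (uniformIcc a b) := by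
  have := isProbabilityMeasure_uniformIcc hab
  refine MemLp.of_bound aestronglyMeasurable_id (max |a| |b|) ?_
  filter_upwards [(ae_restrict_mem measurableSet_Icc).filter_mono
    (Measure.ae_smul_measure_le _)] with x hx
  exact abs_le_max_abs_abs hx.1 hx.2

theorem integral_id_uniformIcc (hab : a < b) : ∫ x, x ∂uniformIcc a b = (a + b) / 2 := by
  rw [uniformIcc, ProbabilityTheory.cond, integral_smul_measure, integral_Icc_eq_integral_Ioc,
    ← intervalIntegral.integral_of_le hab.le, integral_id, Real.volume_Icc,
    ENNReal.toReal_inv, ENNReal.toReal_ofReal (sub_pos.2 hab).le, smul_eq_mul]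
  field_simp [(sub_pos.2 hab).ne']
  ring

theorem integral_sq_uniformIcc (hab : a < b) :
    ∫ x, x ^ 2 ∂uniformIcc a b = (a ^ 2 + a * b + b ^ 2) / 3 := by
  rw [uniformIcc, ProbabilityTheory.cond, integral_smul_measure, integral_Icc_eq_integral_Ioc,
    ← intervalIntegral.integral_of_le hab.le, integral_pow, Real.volume_Icc,
    ENNReal.toReal_inv, ENNReal.toReal_ofReal (sub_pos.2 hab).le, smul_eq_mul]
  field_simp [(sub_pos.2 hab).ne']
  ring

end UniformIcc

section UniformRandomVariable

variable {Ω : Type*} [MeasurableSpace Ω] {P : Measure Ω} {X : Ω → ℝ} {a b : ℝ}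

theorem memLp_of_map_eq_uniformIcc (hX : AEMeasurable X P) (hlaw : P.map X = uniformIcc a b)
    (hab : a < b) (p : ENNReal) : MemLp X p P :=
  (memLp_map_measure_iff (g := id) (hlaw ▸ aestronglyMeasurable_id) hX).1
    (hlaw ▸ memLp_id_uniformIcc hab p)

theorem integral_eq_of_map_eq_uniformIcc (hX : AEMeasurable X P)
    (hlaw : P.map X = uniformIcc a b) (hab : a < b) : ∫ ω, X ω ∂P = (a + b) / 2 := by
  rw [← integral_id_uniformIcc hab, ← hlaw]
  exact (integral_map hX aestronglyMeasurable_id).symm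

theorem integral_sq_eq_of_map_eq_uniformIcc (hX : AEMeasurable X P)
    (hlaw : P.map X = uniformIcc a b) (hab : a < b) :
    ∫ ω, X ω ^ 2 ∂P = (a ^ 2 + a * b + b ^ 2) / 3 := by
  rw [← integral_sq_uniformIcc hab, ← hlaw, integral_map hX (by fun_prop)]

end UniformRandomVariable

section Dither

variable {Ω : Type*} [MeasurableSpace Ω] {P : Measure Ω} {X Y S : Ω → ℝ}

theorem memLp_two_add_mul_of_indepFun (hX : MemLp X 2 P) (hY : MemLp Y 2 P) (hS : MemLp S 2 P)
    (hind : IndepFun X S P) : MemLp (fun ω => Y ω + S ω * X ω) 2 P := by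
  have hsq : IndepFun (fun ω => S ω ^ 2) (fun ω => X ω ^ 2) P :=
    hind.symm.comp (φ := fun s => s ^ 2) (ψ := fun x => x ^ 2) (by fun_prop) (by fun_prop)
  have hSX : Integrable (fun ω => (S ω * X ω) ^ 2) P := by
    simp only [mul_pow]
    exact hsq.integrable_mul hS.integrable_sq hX.integrable_sq
  exact hY.add ((memLp_two_iff_integrable_sq (hS.1.mul hX.1)).2 hSX)

theorem integral_sq_add_mul_of_indepFun [IsProbabilityMeasure P] (hX : MemLp X 2 P)
    (hY : MemLp Y 2 P) (hS : MemLp S 2 P) (hX0 : ∫ ω, X ω ∂P = 0)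
    (hind : IndepFun X (fun ω => (Y ω, S ω)) P) :
    ∫ ω, (Y ω + S ω * X ω) ^ 2 ∂P = ∫ ω, Y ω ^ 2 ∂P + (∫ ω, X ω ^ 2 ∂P) * ∫ ω, S ω ^ 2 ∂P := by
  have hXYS : IndepFun X (fun ω => Y ω * S ω) P :=
    hind.comp (φ := id) (ψ := fun p : ℝ × ℝ => p.1 * p.2) measurable_id (by fun_prop)
  have hXS : IndepFun (fun ω => X ω ^ 2) (fun ω => S ω ^ 2) P :=
    hind.comp (φ := fun x => x ^ 2) (ψ := fun p : ℝ × ℝ => p.2 ^ 2) (by fun_prop) (by fun_prop)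
  have hcross_int : Integrable (fun ω => 2 * (X ω * (Y ω * S ω))) P :=
    (hXYS.integrable_mul (hX.integrable one_le_two) (hY.integrable_mul hS)).const_mul 2
  have hsquare_int : Integrable (fun ω => X ω ^ 2 * S ω ^ 2) P :=
    hXS.integrable_mul hX.integrable_sq hS.integrable_sq
  have hcross : ∫ ω, 2 * (X ω * (Y ω * S ω)) ∂P = 0 := by
    rw [integral_const_mul, hXYS.integral_fun_mul_eq_mul_integral hX.1 (hY.1.mul hS.1), hX0]
    ring
  calc ∫ ω, (Y ω + S ω * X ω) ^ 2 ∂P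
      = ∫ ω, Y ω ^ 2 + 2 * (X ω * (Y ω * S ω)) + X ω ^ 2 * S ω ^ 2 ∂P :=
        integral_congr_ae (.of_forall fun ω => by ring)
    _ = ∫ ω, Y ω ^ 2 ∂P + ∫ ω, X ω ^ 2 * S ω ^ 2 ∂P := by
        rw [integral_add ?_ hsquare_int, integral_add hY.integrable_sq hcross_int, hcross,
          add_zero]
        exact hY.integrable_sq.add hcross_int
    _ = _ := by
        rw [hXS.integral_fun_mul_eq_mul_integral (hX.1.pow 2) (hS.1.pow 2)]

theorem integral_sq_add_mul_of_map_eq_uniformIcc [IsProbabilityMeasure P] {c : ℝ} (hc : 0 < c)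
    (hX : AEMeasurable X P) (hlaw : P.map X = uniformIcc (-c) c) (hY : MemLp Y 2 P)
    (hS : MemLp S 2 P) (hind : IndepFun X (fun ω => (Y ω, S ω)) P) :
    ∫ ω, (Y ω + S ω * X ω) ^ 2 ∂P = ∫ ω, Y ω ^ 2 ∂P + c ^ 2 / 3 * ∫ ω, S ω ^ 2 ∂P := by
  have hc' : -c < c := neg_lt_self hc
  have hX0 : ∫ ω, X ω ∂P = 0 := by
    rw [integral_eq_of_map_eq_uniformIcc hX hlaw hc']
    ring
  rw [integral_sq_add_mul_of_indepFun (memLp_of_map_eq_uniformIcc hX hlaw hc' 2) hY hS hX0 hind,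
    integral_sq_eq_of_map_eq_uniformIcc hX hlaw hc']
  ring

end Dither

theorem pi_norm_sq_le_sum_sq {ι : Type*} [Fintype ι] (x : ι → ℝ) : ‖x‖ ^ 2 ≤ ∑ i, x i ^ 2 := by
  have hle : ‖x‖ ≤ ‖WithLp.toLp 2 x‖ :=
    (pi_norm_le_iff_of_nonneg (norm_nonneg _)).2 fun i => PiLp.norm_apply_le (WithLp.toLp 2 x) i
  calc ‖x‖ ^ 2 ≤ ‖WithLp.toLp 2 x‖ ^ 2 := by gcongr
    _ = ∑ i, x i ^ 2 := EuclideanSpace.real_norm_sq_eq _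

theorem dqsg_variance_bound_general
    {Ω : Type*} [MeasurableSpace Ω] (P : Measure Ω) [IsProbabilityMeasure P]
    (n : ℕ) (Δ : ℝ) (hΔ : 0 < Δ)
    (g e : Ω → (Fin n → ℝ)) (he : Measurable e)
    (hgL2 : MemLp g 2 P)
    (μ : Fin n → ℝ)
    (hindep : IndepFun g e P)
    (heLaw : ∀ i, Measure.map (fun ω => e ω i) P = uniformIcc (-(Δ / 2)) (Δ / 2)) :
    (∫ ω, ∑ i, (g ω i + ‖g ω‖ * e ω i - μ i) ^ 2 ∂P)
      ≤ n * Δ ^ 2 / 12 * (∫ ω, ∑ i, (g ω i) ^ 2 ∂P)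
        + (∫ ω, ∑ i, (g ω i - μ i) ^ 2 ∂P) := by
  have hhalf : 0 < Δ / 2 := half_pos hΔ
  have he_meas (i : Fin n) : AEMeasurable (fun ω => e ω i) P :=
    ((measurable_pi_apply i).comp he).aemeasurable
  have hY_L2 (i : Fin n) : MemLp (fun ω => g ω i - μ i) 2 P := (hgL2.eval i).sub (memLp_const _)
  have hind (i : Fin n) : IndepFun (fun ω => e ω i) (fun ω => (g ω i - μ i, ‖g ω‖)) P :=
    hindep.symm.comp (φ := fun x : Fin n → ℝ => x i)
      (ψ := fun x : Fin n → ℝ => (x i - μ i, ‖x‖)) (by fun_prop) (by fun_prop)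
  have hsq_L1 (i : Fin n) : Integrable (fun ω => (g ω i - μ i + ‖g ω‖ * e ω i) ^ 2) P :=
    (memLp_two_add_mul_of_indepFun
      (memLp_of_map_eq_uniformIcc (he_meas i) (heLaw i) (neg_lt_self hhalf) 2) (hY_L2 i) hgL2.norm
      ((hind i).comp measurable_id measurable_snd)).integrable_sq
  have hsup_le_euclid : ∫ ω, ‖g ω‖ ^ 2 ∂P ≤ ∫ ω, ∑ i, g ω i ^ 2 ∂P :=
    integral_mono hgL2.norm.integrable_sq
      (integrable_finsetSum _ fun i _ => (hgL2.eval i).integrable_sq)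
      fun ω => pi_norm_sq_le_sum_sq (g ω)
  simp_rw [show ∀ ω i, g ω i + ‖g ω‖ * e ω i - μ i = g ω i - μ i + ‖g ω‖ * e ω i from
    fun _ _ => by ring]
  calc ∫ ω, ∑ i, (g ω i - μ i + ‖g ω‖ * e ω i) ^ 2 ∂P
      = ∑ i, ∫ ω, (g ω i - μ i + ‖g ω‖ * e ω i) ^ 2 ∂P :=
        integral_finsetSum _ fun i _ => hsq_L1 i
    _ = n * Δ ^ 2 / 12 * ∫ ω, ‖g ω‖ ^ 2 ∂P + ∫ ω, ∑ i, (g ω i - μ i) ^ 2 ∂P := by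
        rw [integral_finsetSum _ fun i _ => (hY_L2 i).integrable_sq]
        simp only [integral_sq_add_mul_of_map_eq_uniformIcc hhalf (he_meas _) (heLaw _) (hY_L2 _)
          hgL2.norm (hind _), Finset.sum_add_distrib, Finset.sum_const, Finset.card_univ,
          Fintype.card_fin, nsmul_eq_mul]
        ring
    _ ≤ n * Δ ^ 2 / 12 * ∫ ω, ∑ i, g ω i ^ 2 ∂P + ∫ ω, ∑ i, (g ω i - μ i) ^ 2 ∂P := by
        gcongr

/-- **Variance bound for the dithered quantized stochastic gradient (Lemma 2, P2).**
If `g` is a square-integrable random vector in `ℝⁿ` with mean `μ`, and `e` is independent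
of `g` with i.i.d. coordinates uniform on `[-Δ/2, Δ/2]`, then the DQSG `g̃ = g + ‖g‖_∞ • e`
satisfies `E[‖g̃ − μ‖₂²] ≤ (nΔ²/12)·E[‖g‖₂²] + E[‖g − μ‖₂²]`.
(The norm `‖g ω‖` on `Fin n → ℝ` is the sup norm; the squared Euclidean norm is written
as a sum of squares.) -/
theorem dqsg_variance_bound
    {Ω : Type*} [MeasurableSpace Ω] (P : Measure Ω) [IsProbabilityMeasure P]
    (n : ℕ) (Δ : ℝ) (hΔ : 0 < Δ)
    (g e : Ω → (Fin n → ℝ)) (hg : Measurable g) (he : Measurable e)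
    (hgL2 : MemLp g 2 P)
    (μ : Fin n → ℝ) (hmean : (∫ ω, g ω ∂P) = μ)
    (hindep : IndepFun g e P)
    (heIndep : iIndepFun (fun i ω => e ω i) P)
    (heLaw : ∀ i, Measure.map (fun ω => e ω i) P = uniformIcc (-(Δ / 2)) (Δ / 2)) :
    (∫ ω, ∑ i, (g ω i + ‖g ω‖ * e ω i - μ i) ^ 2 ∂P)
      ≤ n * Δ ^ 2 / 12 * (∫ ω, ∑ i, (g ω i) ^ 2 ∂P)
        + (∫ ω, ∑ i, (g ω i - μ i) ^ 2 ∂P) :=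
  dqsg_variance_bound_general P n Δ hΔ g e he hgL2 μ hindep heLaw
end

section
/- Let n = K·m for positive integers K, m, let μ ∈ ℝⁿ and σ > 0, and let g be a random vector in ℝⁿ whose coordinates are independent with g_i ~ N(μ_i, σ²). Partition {1,…,n} into K consecutive blocks of length m. Let e be a random vector in ℝⁿ, independent of g, with i.i.d. coordinates uniform on [-Δ/2, Δ/2], and define g̃ᴷ blockwise: on block j, g̃ᴷ = g⁽ʲ⁾ + ‖g⁽ʲ⁾‖_∞ · e⁽ʲ⁾, where g⁽ʲ⁾ and e⁽ʲ⁾ denote the restrictions of g and e to block j. Then E[‖g̃ᴷ − μ‖₂²] − E[‖g − μ‖₂²] ≤ (Δ²/6)·[ 2·ln(√2·n/K)·E[‖g − μ‖₂²] + n·‖μ‖_∞² ]. -/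
open MeasureTheory ProbabilityTheory

/-!
Expanding the square on each coordinate, the cross term `E[(g - μ) ‖g⁽ʲ⁾‖ e]` vanishes because the
dither is centred and independent of `g`, so the excess is exactly
`(Δ² / 12) · m · ∑ⱼ E‖g⁽ʲ⁾‖²_∞`. Each block is controlled by a Gaussian maximal inequality: for
`X ~ N(μ, σ²)` one has `E exp (X² / 4σ²) = √2 exp (μ² / 2σ²)`, so Jensen's inequality and a union
bound over the `m` coordinates give `E‖g⁽ʲ⁾‖²_∞ ≤ 4σ² log (√2 m) + 2‖μ‖²_∞`. Since
`E‖g - μ‖² = nσ²` and `n / K = m`, this is the claim.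
-/

open Real Set
open scoped NNReal ENNReal

lemma Pi.exists_norm_eq_norm_apply {ι E : Type*} [Fintype ι] [Nonempty ι]
    [SeminormedAddCommGroup E] (f : ι → E) : ∃ i, ‖f‖ = ‖f i‖ := by
  obtain ⟨i, -, hi⟩ := Finset.exists_mem_eq_sup Finset.univ Finset.univ_nonempty (‖f ·‖₊)
  exact ⟨i, congrArg NNReal.toReal (Pi.nnnorm_def f ▸ hi)⟩

lemma Pi.apply_norm_le_sum {ι E : Type*} [Fintype ι] [Nonempty ι] [SeminormedAddCommGroup E]
    {F : ℝ → ℝ} (hF : ∀ t, 0 ≤ F t) (f : ι → E) : F ‖f‖ ≤ ∑ i, F ‖f i‖ := by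
  obtain ⟨i, hi⟩ := Pi.exists_norm_eq_norm_apply f
  rw [hi]
  exact Finset.single_le_sum (fun j _ => hF ‖f j‖) (Finset.mem_univ i)

namespace ProbabilityTheory

variable {Ω : Type*} [MeasurableSpace Ω] {P : Measure Ω}

lemma integral_sum_sum {ι κ : Type*} [Fintype ι] [Fintype κ] {f : ι → κ → Ω → ℝ}
    (hf : ∀ j i, Integrable (f j i) P) :
    ∫ ω, ∑ j, ∑ i, f j i ω ∂P = ∑ j, ∑ i, ∫ ω, f j i ω ∂P := by
  rw [integral_finsetSum _ fun j _ => integrable_finsetSum _ fun i _ => hf j i]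
  exact Finset.sum_congr rfl fun j _ => integral_finsetSum _ fun i _ => hf j i

lemma integral_uniformIcc {a b : ℝ} (hab : a < b) (f : ℝ → ℝ) :
    ∫ x, f x ∂uniformIcc a b = (b - a)⁻¹ * ∫ x in a..b, f x := by
  rw [uniformIcc, cond, integral_smul_measure, Real.volume_Icc,
    intervalIntegral.integral_of_le hab.le, integral_Icc_eq_integral_Ioc,
    ENNReal.toReal_inv, ENNReal.toReal_ofReal (sub_nonneg.2 hab.le), smul_eq_mul]

lemma integral_id_uniformIcc_neg {c : ℝ} (hc : 0 < c) : ∫ x, x ∂uniformIcc (-c) c = 0 := by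
  rw [integral_uniformIcc (by linarith), integral_id]
  ring

lemma integral_sq_uniformIcc_neg {c : ℝ} (hc : 0 < c) :
    ∫ x, x ^ 2 ∂uniformIcc (-c) c = c ^ 2 / 3 := by
  rw [integral_uniformIcc (by linarith), integral_pow]
  field_simp
  ring

lemma HasLaw.memLp_of_uniformIcc [IsFiniteMeasure P] {Z : Ω → ℝ} {a b : ℝ}
    (hZ : HasLaw Z (uniformIcc a b) P) (p : ℝ≥0∞) : MemLp Z p P := by
  have hmem : ∀ᵐ ω ∂P, Z ω ∈ Icc a b :=
    (hZ.ae_iff measurableSet_Icc.mem).2 (ae_cond_mem measurableSet_Icc)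
  refine MemLp.of_bound hZ.aemeasurable.aestronglyMeasurable (max |a| |b|) ?_
  filter_upwards [hmem] with ω hω
  exact abs_le_max_abs_abs hω.1 hω.2

lemma integral_sq_add_mul_of_indepFun [IsFiniteMeasure P] {Y S Z : Ω → ℝ}
    (hind : IndepFun (fun ω => (Y ω, S ω)) Z P)
    (hY : MemLp Y 2 P) (hS : MemLp S 2 P) (hZ : MemLp Z 2 P) (hZ0 : ∫ ω, Z ω ∂P = 0) :
    Integrable (fun ω => (Y ω + S ω * Z ω) ^ 2) P ∧
      ∫ ω, (Y ω + S ω * Z ω) ^ 2 ∂P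
        = ∫ ω, Y ω ^ 2 ∂P + (∫ ω, S ω ^ 2 ∂P) * ∫ ω, Z ω ^ 2 ∂P := by
  have hYS_Z : IndepFun (fun ω => Y ω * S ω) Z P :=
    hind.comp (φ := fun p : ℝ × ℝ => p.1 * p.2) (ψ := id) (by fun_prop) measurable_id
  have hS2_Z2 : IndepFun (fun ω => S ω ^ 2) (fun ω => Z ω ^ 2) P :=
    hind.comp (φ := fun p : ℝ × ℝ => p.2 ^ 2) (ψ := fun z => z ^ 2) (by fun_prop) (by fun_prop)
  have hcross : Integrable (fun ω => Y ω * S ω * Z ω) P :=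
    hYS_Z.integrable_mul (hY.integrable_mul hS) (hZ.integrable one_le_two)
  have hquad : Integrable (fun ω => S ω ^ 2 * Z ω ^ 2) P :=
    hS2_Z2.integrable_mul hS.integrable_sq hZ.integrable_sq
  have hexpand : (fun ω => (Y ω + S ω * Z ω) ^ 2)
      = fun ω => Y ω ^ 2 + 2 * (Y ω * S ω * Z ω) + S ω ^ 2 * Z ω ^ 2 := by
    ext ω; ring
  have hlin : Integrable (fun ω => Y ω ^ 2 + 2 * (Y ω * S ω * Z ω)) P :=
    hY.integrable_sq.add (hcross.const_mul 2)
  rw [hexpand]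
  refine ⟨hlin.add hquad, ?_⟩
  rw [integral_add hlin hquad,
    integral_add hY.integrable_sq (hcross.const_mul 2), integral_const_mul,
    hYS_Z.integral_fun_mul_eq_mul_integral (hY.integrable_mul hS).aestronglyMeasurable
      hZ.aestronglyMeasurable,
    hS2_Z2.integral_fun_mul_eq_mul_integral hS.integrable_sq.aestronglyMeasurable
      hZ.integrable_sq.aestronglyMeasurable, hZ0]
  ring

lemma HasLaw.integral_sub_sq_gaussianReal {X : Ω → ℝ} {μ : ℝ} {v : ℝ≥0}
    (hX : HasLaw X (gaussianReal μ v) P) : ∫ ω, (X ω - μ) ^ 2 ∂P = v := by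
  have hvar := variance_id_gaussianReal (μ := μ) (v := v)
  simp only [variance_eq_integral aemeasurable_id, id_eq, integral_id_gaussianReal] at hvar
  rw [← hvar, ← hX.integral_comp (by fun_prop)]
  rfl

lemma integral_sum_sum_sub_sq_of_hasLaw_gaussianReal [IsProbabilityMeasure P] {ι κ : Type*}
    [Fintype ι] [Fintype κ] {X : Ω → ι → κ → ℝ} {μ : ι → κ → ℝ} {v : ℝ≥0}
    (hX : ∀ j i, HasLaw (fun ω => X ω j i) (gaussianReal (μ j i) v) P) :
    ∫ ω, ∑ j, ∑ i, (X ω j i - μ j i) ^ 2 ∂P = Fintype.card ι * Fintype.card κ * v := by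
  rw [integral_sum_sum (f := fun j i ω => (X ω j i - μ j i) ^ 2) fun j i =>
    ((hX j i).hasGaussianLaw.memLp_two.sub (memLp_const _)).integrable_sq]
  simp [(hX _ _).integral_sub_sq_gaussianReal, mul_assoc]

lemma gaussianPDFReal_mul_exp_sq_div (μ : ℝ) {v : ℝ≥0} (hv : v ≠ 0) (x : ℝ) :
    gaussianPDFReal μ v x * exp (x ^ 2 / (4 * v))
      = (√(2 * π * v))⁻¹ * exp (μ ^ 2 / (2 * v)) * exp (-(4 * v : ℝ)⁻¹ * (x - 2 * μ) ^ 2) := by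
  have hv' : (v : ℝ) ≠ 0 := NNReal.coe_ne_zero.2 hv
  rw [gaussianPDFReal, mul_assoc, ← exp_add, mul_assoc _ (exp _), ← exp_add]
  congr 2
  field_simp
  ring

/-- Completing the square, `exp (x² / 4v)` times the density of `N(μ, v)` is a multiple of the
density of `N(2μ, 2v)`. -/
lemma integral_exp_sq_div_gaussianReal (μ : ℝ) {v : ℝ≥0} (hv : v ≠ 0) :
    ∫ x, exp (x ^ 2 / (4 * v)) ∂gaussianReal μ v = √2 * exp (μ ^ 2 / (2 * v)) := by
  have hv' : (0 : ℝ) < v := NNReal.coe_pos.2 (pos_iff_ne_zero.2 hv)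
  simp_rw [integral_gaussianReal_eq_integral_smul hv, smul_eq_mul,
    gaussianPDFReal_mul_exp_sq_div μ hv, integral_const_mul]
  rw [integral_sub_right_eq_self (fun y => exp (-(4 * v : ℝ)⁻¹ * y ^ 2)) (2 * μ),
    integral_gaussian, show π / (4 * v : ℝ)⁻¹ = 2 * (2 * π * v) by field_simp; ring,
    Real.sqrt_mul zero_le_two]
  have : √(2 * π * v) ≠ 0 := by positivity
  field_simp

lemma integrable_exp_sq_div_gaussianReal (μ : ℝ) {v : ℝ≥0} (hv : v ≠ 0) :
    Integrable (fun x => exp (x ^ 2 / (4 * v))) (gaussianReal μ v) :=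
  Integrable.of_integral_ne_zero (by rw [integral_exp_sq_div_gaussianReal μ hv]; positivity)

section MaximalInequality

variable {ι : Type*} [Fintype ι] [Nonempty ι]

lemma integral_exp_sq_norm_div_le {X : Ω → ι → ℝ} {μ : ι → ℝ} {v : ℝ≥0} (hv : v ≠ 0)
    (hX : ∀ i, HasLaw (fun ω => X ω i) (gaussianReal (μ i) v) P) :
    Integrable (fun ω => exp (‖X ω‖ ^ 2 / (4 * v))) P ∧
      ∫ ω, exp (‖X ω‖ ^ 2 / (4 * v)) ∂P ≤ Fintype.card ι * (√2 * exp (‖μ‖ ^ 2 / (2 * v))) := by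
  have hcoord : ∀ i, Integrable (fun ω => exp (X ω i ^ 2 / (4 * v))) P := fun i =>
    ((hX i).map_eq ▸ integrable_exp_sq_div_gaussianReal (μ i) hv).comp_aemeasurable
      (hX i).aemeasurable
  have hcoord_eq : ∀ i, ∫ ω, exp (X ω i ^ 2 / (4 * v)) ∂P = √2 * exp (μ i ^ 2 / (2 * v)) := by
    intro i
    rw [← integral_exp_sq_div_gaussianReal (μ i) hv, ← (hX i).integral_comp (by fun_prop)]
    rfl
  have hsum : Integrable (fun ω => ∑ i, exp (X ω i ^ 2 / (4 * v))) P :=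
    integrable_finsetSum _ fun i _ => hcoord i
  have hle : ∀ ω, exp (‖X ω‖ ^ 2 / (4 * v)) ≤ ∑ i, exp (X ω i ^ 2 / (4 * v)) := fun ω => by
    simpa only [Real.norm_eq_abs, sq_abs] using
      Pi.apply_norm_le_sum (F := fun t => exp (t ^ (2 : ℕ) / (4 * v))) (fun _ => (exp_pos _).le)
        (X ω)
  have hXm : AEMeasurable X P := aemeasurable_pi_lambda X fun i => (hX i).aemeasurable
  refine ⟨hsum.mono' (by fun_prop) (ae_of_all _ fun ω => ?_), ?_⟩
  · rw [Real.norm_of_nonneg (exp_pos _).le]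
    exact hle ω
  calc ∫ ω, exp (‖X ω‖ ^ 2 / (4 * v)) ∂P
      ≤ ∫ ω, ∑ i, exp (X ω i ^ 2 / (4 * v)) ∂P :=
        integral_mono_of_nonneg (ae_of_all _ fun _ => (exp_pos _).le) hsum (ae_of_all _ hle)
    _ = ∑ i, √2 * exp (μ i ^ 2 / (2 * v)) := by
        rw [integral_finsetSum _ fun i _ => hcoord i]
        exact Finset.sum_congr rfl fun i _ => hcoord_eq i
    _ ≤ Fintype.card ι * (√2 * exp (‖μ‖ ^ 2 / (2 * v))) := by
        rw [← nsmul_eq_mul]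
        refine Finset.sum_le_card_nsmul _ _ _ fun i _ => ?_
        gcongr √2 * exp (?_ / _)
        simpa only [Real.norm_eq_abs, sq_abs] using pow_le_pow_left₀ (norm_nonneg _)
          (norm_le_pi_norm μ i) 2

/-- Jensen's inequality for `exp (t / 4v)` and a union bound over the coordinates. -/
lemma integral_sq_norm_le_of_hasLaw_gaussianReal [IsProbabilityMeasure P] {X : Ω → ι → ℝ}
    {μ : ι → ℝ} {v : ℝ≥0} (hv : v ≠ 0)
    (hX : ∀ i, HasLaw (fun ω => X ω i) (gaussianReal (μ i) v) P) :
    ∫ ω, ‖X ω‖ ^ 2 ∂P ≤ 4 * v * log (√2 * Fintype.card ι) + 2 * ‖μ‖ ^ 2 := by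
  have hv' : (0 : ℝ) < v := NNReal.coe_pos.2 (pos_iff_ne_zero.2 hv)
  obtain ⟨hexp_int, hexp_le⟩ := integral_exp_sq_norm_div_le hv hX
  have hsq : Integrable (fun ω => ‖X ω‖ ^ 2 / (4 * v)) P :=
    (MemLp.of_eval fun i => (hX i).hasGaussianLaw.memLp_two).norm.integrable_sq.div_const _
  have hjensen : exp (∫ ω, ‖X ω‖ ^ 2 / (4 * v) ∂P) ≤ ∫ ω, exp (‖X ω‖ ^ 2 / (4 * v)) ∂P :=
    convexOn_exp.map_integral_le continuous_exp.continuousOn isClosed_univ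
      (ae_of_all _ fun _ => mem_univ _) hsq hexp_int
  have hlog : (∫ ω, ‖X ω‖ ^ 2 ∂P) / (4 * v) ≤ log (√2 * Fintype.card ι) + ‖μ‖ ^ 2 / (2 * v) := by
    rw [← integral_div, ← log_exp (‖μ‖ ^ 2 / (2 * v)), ← log_mul (by positivity) (by positivity),
      le_log_iff_exp_le (by positivity)]
    linarith
  rw [div_le_iff₀ (by positivity)] at hlog
  field_simp at hlog
  linarith

lemma sum_integral_sq_norm_le_of_hasLaw_gaussianReal [IsProbabilityMeasure P] {κ : Type*}
    [Fintype κ] {X : Ω → κ → ι → ℝ} {μ : κ → ι → ℝ} {v : ℝ≥0} (hv : v ≠ 0)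
    (hX : ∀ j i, HasLaw (fun ω => X ω j i) (gaussianReal (μ j i) v) P) :
    ∑ j, ∫ ω, ‖X ω j‖ ^ 2 ∂P
      ≤ Fintype.card κ * (4 * v * log (√2 * Fintype.card ι) + 2 * ‖μ‖ ^ 2) := by
  rw [← nsmul_eq_mul]
  refine Finset.sum_le_card_nsmul _ _ _ fun j _ => ?_
  have hμ := pow_le_pow_left₀ (norm_nonneg _) (norm_le_pi_norm μ j) 2
  linarith [integral_sq_norm_le_of_hasLaw_gaussianReal hv (hX j)]

end MaximalInequality

lemma integral_sum_sq_dithered_sub [IsFiniteMeasure P] {ι κ : Type*} [Fintype ι] [Fintype κ]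
    {g e : Ω → ι → κ → ℝ} (μ : ι → κ → ℝ) {c : ℝ} (hc : 0 < c)
    (hg : ∀ j i, MemLp (fun ω => g ω j i) 2 P)
    (he : ∀ j i, HasLaw (fun ω => e ω j i) (uniformIcc (-c) c) P) (hindep : IndepFun g e P) :
    ∫ ω, ∑ j, ∑ i, (g ω j i + ‖g ω j‖ * e ω j i - μ j i) ^ 2 ∂P
        - ∫ ω, ∑ j, ∑ i, (g ω j i - μ j i) ^ 2 ∂P
      = c ^ 2 / 3 * Fintype.card κ * ∑ j, ∫ ω, ‖g ω j‖ ^ 2 ∂P := by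
  have hcentred (j i) : MemLp (fun ω => g ω j i - μ j i) 2 P := (hg j i).sub (memLp_const _)
  have hdither (j i) := integral_sq_add_mul_of_indepFun (Y := fun ω => g ω j i - μ j i)
    (S := fun ω => ‖g ω j‖) (Z := fun ω => e ω j i)
    (hindep.comp (φ := fun x : ι → κ → ℝ => (x j i - μ j i, ‖x j‖))
      (ψ := fun y : ι → κ → ℝ => y j i) (by fun_prop) (by fun_prop))
    (hcentred j i) (MemLp.of_eval fun i => hg j i).norm ((he j i).memLp_of_uniformIcc 2)
    ((he j i).integral_eq.trans (integral_id_uniformIcc_neg hc))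
  have hnoise (j i) : ∫ ω, e ω j i ^ 2 ∂P = c ^ 2 / 3 := by
    rw [← integral_sq_uniformIcc_neg hc, ← (he j i).integral_comp (by fun_prop)]
    rfl
  simp_rw [add_sub_right_comm]
  rw [integral_sum_sum fun j i => (hdither j i).1,
    integral_sum_sum fun j i => (hcentred j i).integrable_sq]
  simp_rw [(hdither _ _).2, hnoise, Finset.sum_add_distrib, add_sub_cancel_left, Finset.sum_const,
    Finset.card_univ, nsmul_eq_mul, Finset.mul_sum]
  exact Finset.sum_congr rfl fun j _ => by ring

end ProbabilityTheory

/-- `ℝⁿ` is stored blockwise as `Fin K → Fin m → ℝ`, so `‖g ω j‖` and `‖μ‖` are sup norms. -/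
theorem dqsg_partitioned_excess_variance_gaussian_general
    {Ω : Type*} [MeasurableSpace Ω] (P : Measure Ω) [IsProbabilityMeasure P]
    (K m : ℕ) (hK : 0 < K) (hm : 0 < m) (n : ℕ) (hn : n = K * m)
    (Δ : ℝ) (hΔ : 0 < Δ) (σ : ℝ) (hσ : 0 < σ)
    (g e : Ω → (Fin K → Fin m → ℝ)) (hg : Measurable g) (he : Measurable e)
    (μ : Fin K → Fin m → ℝ)
    (hgLaw : ∀ (p : Fin K × Fin m),
      Measure.map (fun ω => g ω p.1 p.2) P = gaussianReal (μ p.1 p.2) (Real.toNNReal (σ ^ 2)))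
    (hindep : IndepFun g e P)
    (heLaw : ∀ (p : Fin K × Fin m),
      Measure.map (fun ω => e ω p.1 p.2) P = uniformIcc (-(Δ / 2)) (Δ / 2)) :
    (∫ ω, ∑ j, ∑ i, (g ω j i + ‖g ω j‖ * e ω j i - μ j i) ^ 2 ∂P)
        - (∫ ω, ∑ j, ∑ i, (g ω j i - μ j i) ^ 2 ∂P)
      ≤ Δ ^ 2 / 6 *
          (2 * Real.log (Real.sqrt 2 * n / K) * (∫ ω, ∑ j, ∑ i, (g ω j i - μ j i) ^ 2 ∂P)
            + n * ‖μ‖ ^ 2) := by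
  have hv : (σ ^ 2).toNNReal ≠ 0 := (Real.toNNReal_pos.2 (by positivity)).ne'
  have hvσ : ((σ ^ 2).toNNReal : ℝ) = σ ^ 2 := Real.coe_toNNReal _ (sq_nonneg σ)
  have : Nonempty (Fin m) := Fin.pos_iff_nonempty.1 hm
  have hgLaw' (j i) : HasLaw (fun ω => g ω j i) (gaussianReal (μ j i) (σ ^ 2).toNNReal) P :=
    ⟨by fun_prop, hgLaw (j, i)⟩
  have hblocks := sum_integral_sq_norm_le_of_hasLaw_gaussianReal hv hgLaw'
  have hlog : Real.log (√2 * n / K) = Real.log (√2 * m) := by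
    rw [hn, Nat.cast_mul, mul_comm (K : ℝ), ← mul_assoc, mul_div_cancel_right₀ _ (by positivity)]
  rw [integral_sum_sq_dithered_sub μ (half_pos hΔ)
      (fun j i => (hgLaw' j i).hasGaussianLaw.memLp_two) (fun j i => ⟨by fun_prop, heLaw (j, i)⟩)
      hindep,
    integral_sum_sum_sub_sq_of_hasLaw_gaussianReal hgLaw', hlog, hn, Nat.cast_mul]
  simp only [Fintype.card_fin, hvσ] at hblocks ⊢
  nlinarith [mul_le_mul_of_nonneg_left hblocks (by positivity : (0 : ℝ) ≤ (Δ / 2) ^ 2 / 3 * m)]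

/-- **Excess variance of blockwise (partitioned) dithered quantization (eq. (4)).**
A vector in `ℝⁿ` with `n = K·m` is represented blockwise as an element of
`Fin K → Fin m → ℝ` (`K` consecutive blocks of length `m`).  If the `n` coordinates of
`g` are independent with `g_{j,i} ~ N(μ_{j,i}, σ²)`, and `e` is independent of `g` with
i.i.d. coordinates uniform on `[-Δ/2, Δ/2]`, then the blockwise DQSG, which on block `j`
equals `g⁽ʲ⁾ + ‖g⁽ʲ⁾‖_∞ • e⁽ʲ⁾`, satisfies
`E[‖g̃ᴷ − μ‖₂²] − E[‖g − μ‖₂²]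
   ≤ (Δ²/6)·(2·ln(√2·n/K)·E[‖g − μ‖₂²] + n·‖μ‖_∞²)`.
(The norm `‖g ω j‖` on a block `Fin m → ℝ` is the sup norm, and `‖μ‖` is the sup norm
over all `n` coordinates; squared Euclidean norms are sums of squares.) -/
theorem dqsg_partitioned_excess_variance_gaussian
    {Ω : Type*} [MeasurableSpace Ω] (P : Measure Ω) [IsProbabilityMeasure P]
    (K m : ℕ) (hK : 0 < K) (hm : 0 < m) (n : ℕ) (hn : n = K * m)
    (Δ : ℝ) (hΔ : 0 < Δ) (σ : ℝ) (hσ : 0 < σ)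
    (g e : Ω → (Fin K → Fin m → ℝ)) (hg : Measurable g) (he : Measurable e)
    (μ : Fin K → Fin m → ℝ)
    (hgIndep : iIndepFun
      (fun (p : Fin K × Fin m) ω => g ω p.1 p.2) P)
    (hgLaw : ∀ (p : Fin K × Fin m),
      Measure.map (fun ω => g ω p.1 p.2) P = gaussianReal (μ p.1 p.2) (Real.toNNReal (σ ^ 2)))
    (hindep : IndepFun g e P)
    (heIndep : iIndepFun
      (fun (p : Fin K × Fin m) ω => e ω p.1 p.2) P)
    (heLaw : ∀ (p : Fin K × Fin m),
      Measure.map (fun ω => e ω p.1 p.2) P = uniformIcc (-(Δ / 2)) (Δ / 2)) :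
    (∫ ω, ∑ j, ∑ i, (g ω j i + ‖g ω j‖ * e ω j i - μ j i) ^ 2 ∂P)
        - (∫ ω, ∑ j, ∑ i, (g ω j i - μ j i) ^ 2 ∂P)
      ≤ Δ ^ 2 / 6 *
          (2 * Real.log (Real.sqrt 2 * n / K) * (∫ ω, ∑ j, ∑ i, (g ω j i - μ j i) ^ 2 ∂P)
            + n * ‖μ‖ ^ 2) :=
  dqsg_partitioned_excess_variance_gaussian_general P K m hK hm n hn Δ hΔ σ hσ g e hg he μ hgLaw
    hindep heLaw
end

section
/- Let Δ₁ > 0, Δ₂ = k·Δ₁ for a positive integer k, and let Q_{Δ}(x) = Δ·⌊x/Δ + 1/2⌋. Fix a scale 0 < α ≤ 1 and reals g, y, z, u with g = y + z (y is the side information and z the discrepancy). Define the nested-quantization encoding e = α·g + u − Q_{Δ₁}(α·g + u), s = Q_{Δ₁}(α·g + u) − Q_{Δ₂}(α·g + u), and the decoding r = s − u − α·y, ĝ = y + α·(r − Q_{Δ₂}(r)). Then r − Q_{Δ₂}(r) = α·z − e − Q_{Δ₂}(α·z − e); in particular, if −Δ₂/2 ≤ α·z − e < Δ₂/2 (correct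 decoding), then ĝ = g − (α·e + (1 − α²)·z). -/
lemma uq_shift (Δ x : ℝ) (hΔ : 0 < Δ) (n : ℤ) :
    uniformQuantizer Δ (x - n * Δ) = uniformQuantizer Δ x - n * Δ := by
  unfold uniformQuantizer
  have h : (x - n * Δ) / Δ + 1 / 2 = (x / Δ + 1 / 2) + (-n : ℤ) := by
    push_cast; field_simp; ring
  rw [h, Int.floor_add_intCast]
  push_cast; ring

lemma uq_small (Δ x : ℝ) (hΔ : 0 < Δ) (h1 : -(Δ / 2) ≤ x) (h2 : x < Δ / 2) :
    uniformQuantizer Δ x = 0 := by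
  unfold uniformQuantizer
  have hfl : ⌊x / Δ + 1 / 2⌋ = 0 := by
    rw [Int.floor_eq_zero_iff, Set.mem_Ico]
    constructor
    · have : -(1 / 2 : ℝ) ≤ x / Δ := (le_div_iff₀ hΔ).mpr (by linarith)
      linarith
    · have : x / Δ < 1 / 2 := (div_lt_iff₀ hΔ).mpr (by linarith)
      linarith
  rw [hfl]; simp

/-- **Nested dithered quantization: encoding/decoding identity (proof of Theorem 4).**
With fine step `Δ₁`, coarse step `Δ₂ = kΔ₁`, scale `0 < α ≤ 1`, side information `y`,
discrepancy `z` with `g = y + z`, dither `u`, quantization error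
`e = αg + u − Q_{Δ₁}(αg + u)`, transmitted signal `s = Q_{Δ₁}(αg + u) − Q_{Δ₂}(αg + u)`,
and `r = s − u − αy`: one has `r − Q_{Δ₂}(r) = αz − e − Q_{Δ₂}(αz − e)`; in particular,
under correct decoding (`−Δ₂/2 ≤ αz − e < Δ₂/2`), the reconstruction
`ĝ = y + α(r − Q_{Δ₂}(r))` equals `g − (αe + (1 − α²)z)`. -/
theorem nested_dithered_quantization_decoding
    (Δ₁ Δ₂ : ℝ) (hΔ₁ : 0 < Δ₁) (k : ℕ) (hk : 0 < k) (hΔ₂ : Δ₂ = k * Δ₁)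
    (α : ℝ) (hα0 : 0 < α) (hα1 : α ≤ 1)
    (g y z u : ℝ) (hgyz : g = y + z)
    (e s r : ℝ)
    (he : e = α * g + u - uniformQuantizer Δ₁ (α * g + u))
    (hs : s = uniformQuantizer Δ₁ (α * g + u) - uniformQuantizer Δ₂ (α * g + u))
    (hr : r = s - u - α * y) :
    r - uniformQuantizer Δ₂ r = α * z - e - uniformQuantizer Δ₂ (α * z - e) ∧
      (-(Δ₂ / 2) ≤ α * z - e → α * z - e < Δ₂ / 2 →
        y + α * (r - uniformQuantizer Δ₂ r) = g - (α * e + (1 - α ^ 2) * z)) := by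
  have hΔ₂pos : 0 < Δ₂ := by
    rw [hΔ₂]
    positivity
  set n : ℤ := ⌊(α * g + u) / Δ₂ + 1 / 2⌋ with hn
  have hQ2 : uniformQuantizer Δ₂ (α * g + u) = n * Δ₂ := by
    unfold uniformQuantizer; ring
  have hrval : r = (α * z - e) - n * Δ₂ := by
    rw [hr, hs, he, hQ2, hgyz]; ring
  have hmain : r - uniformQuantizer Δ₂ r = α * z - e - uniformQuantizer Δ₂ (α * z - e) := by
    rw [hrval, uq_shift Δ₂ (α * z - e) hΔ₂pos n]; ring
  refine ⟨hmain, fun h1 h2 => ?_⟩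
  rw [hmain, uq_small Δ₂ (α * z - e) hΔ₂pos h1 h2, hgyz]
  ring
end

section
/- Let z be a square-integrable real random variable with E[z²] = σ_z², let Δ₁, Δ₂ > 0, let 0 < α ≤ 1, and let u be uniformly distributed on [-Δ₁/2, Δ₁/2], independent of z. Then P( |α·z + u| > Δ₂/2 ) ≤ Δ₁²/(3Δ₂²) + 4α²σ_z²/Δ₂². Moreover, if |z| < (Δ₂ − Δ₁)/(2α) almost surely, then P( |α·z + u| > Δ₂/2 ) = 0. -/
open MeasureTheory ProbabilityTheory

/-!
The failure event is contained in `{(Δ₂/2)² ≤ (αz + u)²}`, so Markov's inequality bounds its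
probability by `E[(αz + u)²] / (Δ₂/2)²`. Independence and `E[u] = 0` kill the cross term, so
`E[(αz + u)²] = α²σ_z² + E[u²] = α²σ_z² + Δ₁²/12`. If `|z| < (Δ₂ − Δ₁)/(2α)` almost surely, then
`|αz + u| ≤ α|z| + Δ₁/2 < Δ₂/2` almost surely, since the dither never leaves `[-Δ₁/2, Δ₁/2]`.
-/

lemma ae_mem_uniformIcc (a b : ℝ) : ∀ᵐ x ∂uniformIcc a b, x ∈ Set.Icc a b :=
  ae_cond_mem measurableSet_Icc

lemma integral_uniformIcc {a b : ℝ} (hab : a ≤ b) (f : ℝ → ℝ) :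
    ∫ x, f x ∂uniformIcc a b = (b - a)⁻¹ * ∫ x in a..b, f x := by
  rw [uniformIcc, ProbabilityTheory.cond, integral_smul_measure, Real.volume_Icc,
    integral_Icc_eq_integral_Ioc, ← intervalIntegral.integral_of_le hab, ENNReal.toReal_inv,
    ENNReal.toReal_ofReal (sub_nonneg.2 hab), smul_eq_mul]

lemma integral_id_uniformIcc_neg {a : ℝ} (ha : 0 ≤ a) : ∫ x, x ∂uniformIcc (-a) a = 0 := by
  rw [integral_uniformIcc (by linarith) (fun x => x), integral_id]
  ring

lemma integral_sq_uniformIcc_neg {a : ℝ} (ha : 0 ≤ a) :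
    ∫ x, x ^ 2 ∂uniformIcc (-a) a = a ^ 2 / 3 := by
  rw [integral_uniformIcc (by linarith) (· ^ 2), integral_pow]
  rcases ha.eq_or_lt with rfl | ha
  · simp
  · field_simp
    ring

section RandomVariables

variable {Ω : Type*} [MeasurableSpace Ω] {P : Measure Ω}

lemma ae_abs_le_of_map_eq_uniformIcc {u : Ω → ℝ} {a : ℝ} (hu : AEMeasurable u P)
    (hulaw : P.map u = uniformIcc (-a) a) : ∀ᵐ ω ∂P, |u ω| ≤ a := by
  have h := ae_mem_uniformIcc (-a) a
  rw [← hulaw] at h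
  filter_upwards [ae_of_ae_map hu h] with ω hω using abs_le.2 hω

lemma integral_eq_zero_of_map_eq_uniformIcc {u : Ω → ℝ} {a : ℝ} (ha : 0 ≤ a)
    (hu : AEMeasurable u P) (hulaw : P.map u = uniformIcc (-a) a) : ∫ ω, u ω ∂P = 0 := by
  rw [← integral_map (f := fun x => x) hu aestronglyMeasurable_id, hulaw,
    integral_id_uniformIcc_neg ha]

lemma integral_sq_of_map_eq_uniformIcc {u : Ω → ℝ} {a : ℝ} (ha : 0 ≤ a)
    (hu : AEMeasurable u P) (hulaw : P.map u = uniformIcc (-a) a) :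
    ∫ ω, u ω ^ 2 ∂P = a ^ 2 / 3 := by
  rw [← integral_map (f := (· ^ 2)) hu (by fun_prop), hulaw, integral_sq_uniformIcc_neg ha]

lemma integral_add_sq_of_indepFun {X Y : Ω → ℝ} (hXY : IndepFun X Y P) (hX : MemLp X 2 P)
    (hY : MemLp Y 2 P) (hY0 : ∫ ω, Y ω ∂P = 0) :
    ∫ ω, (X ω + Y ω) ^ 2 ∂P = ∫ ω, X ω ^ 2 ∂P + ∫ ω, Y ω ^ 2 ∂P := by
  have hXY_int : Integrable (fun ω => X ω * Y ω) P := hX.integrable_mul hY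
  have hfirst : Integrable (fun ω => X ω ^ 2 + 2 * (X ω * Y ω)) P :=
    hX.integrable_sq.add (hXY_int.const_mul 2)
  have hcross : ∫ ω, X ω * Y ω ∂P = 0 := by
    simpa [hY0] using
      hXY.integral_mul_eq_mul_integral hX.aestronglyMeasurable hY.aestronglyMeasurable
  have hexpand : (fun ω => (X ω + Y ω) ^ 2) = fun ω => X ω ^ 2 + 2 * (X ω * Y ω) + Y ω ^ 2 := by
    ext ω; ring
  rw [hexpand, integral_add hfirst hY.integrable_sq,
    integral_add hX.integrable_sq (hXY_int.const_mul 2), integral_const_mul, hcross]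
  ring

lemma measureReal_lt_abs_le_integral_sq_div [IsFiniteMeasure P] {X : Ω → ℝ}
    (hX : Integrable (fun ω => X ω ^ 2) P) {c : ℝ} (hc : 0 < c) :
    P.real {ω | c < |X ω|} ≤ (∫ ω, X ω ^ 2 ∂P) / c ^ 2 := by
  have hsub : {ω | c < |X ω|} ⊆ {ω | c ^ 2 ≤ X ω ^ 2} := fun ω (hω : c < |X ω|) =>
    show c ^ 2 ≤ X ω ^ 2 from sq_abs (X ω) ▸ pow_le_pow_left₀ hc.le hω.le 2
  rw [le_div_iff₀' (by positivity)]
  calc c ^ 2 * P.real {ω | c < |X ω|} ≤ c ^ 2 * P.real {ω | c ^ 2 ≤ X ω ^ 2} := by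
        gcongr
        exact measure_ne_top _ _
    _ ≤ ∫ ω, X ω ^ 2 ∂P :=
        mul_meas_ge_le_integral_of_nonneg (ae_of_all _ fun ω => sq_nonneg (X ω)) hX _

end RandomVariables

theorem nested_quantization_failure_probability_general
    {Ω : Type*} [MeasurableSpace Ω] (P : Measure Ω) [IsProbabilityMeasure P]
    (Δ₁ Δ₂ : ℝ) (hΔ₁ : 0 < Δ₁) (hΔ₂ : 0 < Δ₂)
    (α : ℝ) (hα0 : 0 < α)
    (z u : Ω → ℝ) (hu : Measurable u)
    (hzL2 : MemLp z 2 P)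
    (σz : ℝ) (hσz : (∫ ω, z ω ^ 2 ∂P) = σz ^ 2)
    (hindep : IndepFun z u P)
    (hulaw : Measure.map u P = uniformIcc (-(Δ₁ / 2)) (Δ₁ / 2)) :
    (P {ω | Δ₂ / 2 < |α * z ω + u ω|}).toReal
        ≤ Δ₁ ^ 2 / (3 * Δ₂ ^ 2) + 4 * α ^ 2 * σz ^ 2 / Δ₂ ^ 2 ∧
      ((∀ᵐ ω ∂P, |z ω| < (Δ₂ - Δ₁) / (2 * α)) →
        P {ω | Δ₂ / 2 < |α * z ω + u ω|} = 0) := by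
  have ha : 0 ≤ Δ₁ / 2 := by positivity
  have hub := ae_abs_le_of_map_eq_uniformIcc hu.aemeasurable hulaw
  have huL2 : MemLp u 2 P :=
    (memLp_top_of_bound hu.aestronglyMeasurable _ hub).mono_exponent le_top
  have hEX2 : ∫ ω, (α * z ω + u ω) ^ 2 ∂P = α ^ 2 * σz ^ 2 + (Δ₁ / 2) ^ 2 / 3 := by
    have hαz_indep : IndepFun (fun ω => α * z ω) u P :=
      hindep.comp (measurable_const_mul α) measurable_id
    rw [integral_add_sq_of_indepFun hαz_indep (hzL2.const_mul α) huL2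
      (integral_eq_zero_of_map_eq_uniformIcc ha hu.aemeasurable hulaw),
      integral_sq_of_map_eq_uniformIcc ha hu.aemeasurable hulaw]
    simp only [mul_pow, integral_const_mul, hσz]
  refine ⟨?_, fun hzb => ?_⟩
  · calc (P {ω | Δ₂ / 2 < |α * z ω + u ω|}).toReal
        ≤ (∫ ω, (α * z ω + u ω) ^ 2 ∂P) / (Δ₂ / 2) ^ 2 :=
          measureReal_lt_abs_le_integral_sq_div
            (((hzL2.const_mul α).add huL2).integrable_sq) (by positivity)
      _ = _ := by
          rw [hEX2]
          field_simp
          ring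
  · rw [measure_eq_zero_iff_ae_notMem]
    filter_upwards [hzb, hub] with ω hz hu_le
    rw [lt_div_iff₀ (by positivity)] at hz
    have htri := abs_add_le (α * z ω) (u ω)
    rw [abs_mul, abs_of_pos hα0] at htri
    exact not_lt.2 (by linarith)

/-- **Decoding failure probability of nested dithered quantization (Theorem 4).**
If `z` is square-integrable with `E[z²] = σ_z²` and the dither `u` is uniform on
`[-Δ₁/2, Δ₁/2]`, independent of `z`, then
`P(|αz + u| > Δ₂/2) ≤ Δ₁²/(3Δ₂²) + 4α²σ_z²/Δ₂²`; moreover, if `|z| < (Δ₂ − Δ₁)/(2α)`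
almost surely, then this probability is `0`. -/
theorem nested_quantization_failure_probability
    {Ω : Type*} [MeasurableSpace Ω] (P : Measure Ω) [IsProbabilityMeasure P]
    (Δ₁ Δ₂ : ℝ) (hΔ₁ : 0 < Δ₁) (hΔ₂ : 0 < Δ₂)
    (α : ℝ) (hα0 : 0 < α) (hα1 : α ≤ 1)
    (z u : Ω → ℝ) (hz : Measurable z) (hu : Measurable u)
    (hzL2 : MemLp z 2 P)
    (σz : ℝ) (hσz : (∫ ω, z ω ^ 2 ∂P) = σz ^ 2)
    (hindep : IndepFun z u P)
    (hulaw : Measure.map u P = uniformIcc (-(Δ₁ / 2)) (Δ₁ / 2)) :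
    (P {ω | Δ₂ / 2 < |α * z ω + u ω|}).toReal
        ≤ Δ₁ ^ 2 / (3 * Δ₂ ^ 2) + 4 * α ^ 2 * σz ^ 2 / Δ₂ ^ 2 ∧
      ((∀ᵐ ω ∂P, |z ω| < (Δ₂ - Δ₁) / (2 * α)) →
        P {ω | Δ₂ / 2 < |α * z ω + u ω|} = 0) :=
  nested_quantization_failure_probability_general P Δ₁ Δ₂ hΔ₁ hΔ₂ α hα0 z u hu hzL2 σz hσz hindep
    hulaw
end
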